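/- arXiv:2007.05458 — 3 statements merged into one kernel-verified Lean document; each statement's English description precedes it below -/
import Mathlib

section
/- Let S ∈ U₁ ⊗ ⋯ ⊗ U_k, T ∈ V₁ ⊗ ⋯ ⊗ V_k and U ∈ W₁ ⊗ ⋯ ⊗ W_k be tensors of order k over ℂ such that S ⊠ T is a degeneration of S ⊠ U. Then for every integer N ≥ 1, the tensor S ⊠ T^{⊠N} is a degeneration of S ⊠ U^{⊠N}. -/
open Finset

namespace Subadditivity

noncomputable section

/-- A tensor of order `k` over `ℂ` with `i`-th factor the space `ℂ^{ι i}` of complex-valued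
functions on the finite index type `ι i`; the tensor is represented by the array of its
coordinates with respect to the standard basis, i.e. by an element of
`ℂ^{ι 0} ⊗ ⋯ ⊗ ℂ^{ι (k-1)} ≃ ((∀ i, ι i) → ℂ)`. -/
abbrev Tensor {k : ℕ} (ι : Fin k → Type) : Type := (∀ i, ι i) → ℂ

/-- `T` is a sum of `r` simple (rank-one) tensors `v j 0 ⊗ ⋯ ⊗ v j (k-1)`. -/
def HasRankLE {k : ℕ} {ι : Fin k → Type} (T : Tensor ι) (r : ℕ) : Prop :=
  ∃ v : Fin r → (∀ i, ι i → ℂ), T = fun x => ∑ j : Fin r, ∏ i : Fin k, v j i (x i)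

/-- Tensor rank: the least `r` such that `T` is a sum of `r` simple tensors. -/
noncomputable def rank {k : ℕ} {ι : Fin k → Type} (T : Tensor ι) : ℕ :=
  sInf {r | HasRankLE T r}

/-- Border rank is at most `r`: `T` lies in the closure of the set of tensors of rank `≤ r`. -/
def HasBorderRankLE {k : ℕ} {ι : Fin k → Type} (T : Tensor ι) (r : ℕ) : Prop :=
  T ∈ closure {S : Tensor ι | HasRankLE S r}

/-- Border rank. -/
noncomputable def borderRank {k : ℕ} {ι : Fin k → Type} (T : Tensor ι) : ℕ :=
  sInf {r | HasBorderRankLE T r}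

open scoped Classical in
/-- Direct sum of two tensors of order `k`: the coordinates supported on the `ι`-part are
those of `T`, the coordinates supported on the `κ`-part are those of `S`, and all mixed
coordinates vanish. -/
noncomputable def dsum {k : ℕ} {ι κ : Fin k → Type} (T : Tensor ι) (S : Tensor κ) :
    Tensor (fun i => ι i ⊕ κ i) := fun x =>
  (if h : ∃ y : ∀ i, ι i, x = fun i => Sum.inl (y i) then T h.choose else 0) +
  (if h : ∃ z : ∀ i, κ i, x = fun i => Sum.inr (z i) then S h.choose else 0)

/-- Kronecker product of two tensors of order `k`. -/
def kron {k : ℕ} {ι κ : Fin k → Type} (T : Tensor ι) (S : Tensor κ) :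
    Tensor (fun i => ι i × κ i) := fun x =>
  T (fun i => (x i).1) * S (fun i => (x i).2)

/-- `N`-th Kronecker power of a tensor of order `k`. -/
def kpow {k : ℕ} {ι : Fin k → Type} (T : Tensor ι) (N : ℕ) :
    Tensor (fun i => Fin N → ι i) := fun x => ∏ j : Fin N, T (fun i => x i j)

/-- The unit tensor `u_k(r) = Σ_{j=1}^r e_j ⊗ ⋯ ⊗ e_j` of order `k`. -/
def unit (k r : ℕ) : Tensor (fun _ : Fin k => Fin r) := fun x =>
  ∑ j : Fin r, ∏ i : Fin k, (if x i = j then (1 : ℂ) else 0)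

/-- `S` is a degeneration of `T`: `S` lies in the closure of the set of tensors obtained
from `T` by applying linear maps `A i` on each factor. -/
def Degen {k : ℕ} {ι κ : Fin k → Type} [∀ i, Fintype (κ i)]
    (S : Tensor ι) (T : Tensor κ) : Prop :=
  S ∈ closure {S' : Tensor ι | ∃ A : ∀ i, ι i → κ i → ℂ,
    S' = fun x => ∑ y : ∀ i, κ i, (∏ i : Fin k, A i (x i) (y i)) * T y}

section Aux

variable {k : ℕ}

/-- Relabel the coordinates of a tensor along maps `e i`. -/
def relabel {ι κ : Fin k → Type} (e : ∀ i, ι i → κ i) (T : Tensor κ) : Tensor ι :=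
  fun x => T fun i => e i (x i)

open scoped Classical in
lemma sum_indicator_pi {κ : Fin k → Type} [∀ i, Fintype (κ i)]
    (T : Tensor κ) (w : ∀ i, κ i) :
    ∑ y : ∀ i, κ i, (∏ i, if y i = w i then (1:ℂ) else 0) * T y = T w := by
  rw [Fintype.sum_eq_single w]
  · simp
  · intro y hy
    obtain ⟨i, hi⟩ := Function.ne_iff.mp hy
    rw [Finset.prod_eq_zero (Finset.mem_univ i) (by simp [hi]), zero_mul]

lemma degen_relabel_self {ι κ : Fin k → Type} [∀ i, Fintype (κ i)]
    (e : ∀ i, ι i → κ i) (T : Tensor κ) : Degen (relabel e T) T := by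
  classical
  apply subset_closure
  refine ⟨fun i a y => if y = e i a then 1 else 0, ?_⟩
  funext x
  exact (sum_indicator_pi T (fun i => e i (x i))).symm

lemma Degen.refl {ι : Fin k → Type} [∀ i, Fintype (ι i)] (T : Tensor ι) : Degen T T :=
  degen_relabel_self (fun _ x => x) T

lemma continuous_degenMap {ι κ : Fin k → Type} [∀ i, Fintype (κ i)]
    (A : ∀ i, ι i → κ i → ℂ) :
    Continuous (fun (T : Tensor κ) =>
      (fun x => ∑ y : ∀ i, κ i, (∏ i : Fin k, A i (x i) (y i)) * T y : Tensor ι)) := by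
  apply continuous_pi
  intro x
  exact continuous_finset_sum _ fun y _ => continuous_const.mul (continuous_apply y)

lemma Degen.relabel_left {ι ι' κ : Fin k → Type} [∀ i, Fintype (κ i)]
    {A : Tensor ι} {B : Tensor κ} (h : Degen A B) (e : ∀ i, ι' i → ι i) :
    Degen (relabel e A) B := by
  have hc : Continuous (fun X : Tensor ι => relabel e X) := by
    apply continuous_pi; intro x; exact continuous_apply _
  refine map_mem_closure hc h ?_
  rintro X ⟨M, rfl⟩
  exact ⟨fun i a y => M i (e i a) y, rfl⟩

lemma Degen.of_relabel_right {ι κ κ' : Fin k → Type}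
    [∀ i, Fintype (κ i)] [∀ i, Fintype (κ' i)]
    {A : Tensor ι} {B : Tensor κ} (e : ∀ i, κ' i ≃ κ i)
    (h : Degen A (relabel (fun i => (e i : κ' i → κ i)) B)) : Degen A B := by
  refine closure_mono ?_ h
  rintro X ⟨M, rfl⟩
  refine ⟨fun i a z => M i a ((e i).symm z), ?_⟩
  funext x
  refine Fintype.sum_equiv (Equiv.piCongrRight e) _ _ (fun y => ?_)
  have h1 : ∀ i, (e i).symm ((Equiv.piCongrRight e) y i) = y i := by
    intro i; simp
  have h2 : B ((Equiv.piCongrRight e) y) = relabel (fun i => (e i : κ' i → κ i)) B y := rfl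
  simp only [h1, h2]

lemma Degen.relabel_right {ι κ κ' : Fin k → Type}
    [∀ i, Fintype (κ i)] [∀ i, Fintype (κ' i)]
    {A : Tensor ι} {B : Tensor κ} (e : ∀ i, κ' i ≃ κ i) (h : Degen A B) :
    Degen A (relabel (fun i => (e i : κ' i → κ i)) B) := by
  apply Degen.of_relabel_right (fun i => (e i).symm)
  have hB : relabel (fun i => ((e i).symm : κ i → κ' i))
      (relabel (fun i => (e i : κ' i → κ i)) B) = B := by
    funext x; simp [relabel]
  rwa [hB]

def piProdEquiv {f g : Fin k → Type} : (∀ i, f i × g i) ≃ (∀ i, f i) × (∀ i, g i) where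
  toFun h := (fun i => (h i).1, fun i => (h i).2)
  invFun p i := (p.1 i, p.2 i)
  left_inv h := rfl
  right_inv p := rfl

lemma Degen.kron {ι ι' κ κ' : Fin k → Type}
    [∀ i, Fintype (κ i)] [∀ i, Fintype (κ' i)]
    {A : Tensor ι} {B : Tensor κ} {C : Tensor ι'} {D : Tensor κ'}
    (h1 : Degen A B) (h2 : Degen C D) :
    Degen (Subadditivity.kron A C) (Subadditivity.kron B D) := by
  have hcont : Continuous (Function.uncurry
      (fun (X : Tensor ι) (Y : Tensor ι') => Subadditivity.kron X Y)) := by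
    apply continuous_pi
    intro x
    exact (((continuous_apply _).comp continuous_fst).mul
      ((continuous_apply _).comp continuous_snd))
  refine map_mem_closure₂ hcont h1 h2 ?_
  rintro X ⟨M, rfl⟩ Y ⟨N, rfl⟩
  refine ⟨fun i p q => M i p.1 q.1 * N i p.2 q.2, ?_⟩
  funext x
  show (∑ y : ∀ i, κ i, (∏ i : Fin k, M i (x i).1 (y i)) * B y) *
      (∑ y : ∀ i, κ' i, (∏ i : Fin k, N i (x i).2 (y i)) * D y) =
      ∑ z : ∀ i, κ i × κ' i,
        (∏ i : Fin k, M i (x i).1 (z i).1 * N i (x i).2 (z i).2) *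
          Subadditivity.kron B D z
  rw [← Equiv.sum_comp (piProdEquiv (f := κ) (g := κ')).symm
    (fun z : ∀ i, κ i × κ' i =>
      (∏ i : Fin k, M i (x i).1 (z i).1 * N i (x i).2 (z i).2) *
        Subadditivity.kron B D z)]
  rw [Fintype.sum_prod_type, Finset.sum_mul_sum]
  refine Finset.sum_congr rfl fun y _ => Finset.sum_congr rfl fun y' _ => ?_
  simp only [piProdEquiv, Equiv.coe_fn_symm_mk, Subadditivity.kron,
    Finset.prod_mul_distrib]
  ring

lemma Degen.trans {ι κ μ' : Fin k → Type} [∀ i, Fintype (κ i)] [∀ i, Fintype (μ' i)]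
    {A : Tensor ι} {B : Tensor κ} {C : Tensor μ'}
    (h1 : Degen A B) (h2 : Degen B C) : Degen A C := by
  classical
  refine closure_minimal ?_ isClosed_closure h1
  rintro X ⟨M, rfl⟩
  refine map_mem_closure (continuous_degenMap M) h2 ?_
  rintro Y ⟨N, rfl⟩
  refine ⟨fun i a c => ∑ b, M i a b * N i b c, ?_⟩
  funext x
  show ∑ y : ∀ i, κ i, (∏ i : Fin k, M i (x i) (y i)) *
      ∑ z : ∀ i, μ' i, (∏ i : Fin k, N i (y i) (z i)) * C z =
    ∑ z : ∀ i, μ' i, (∏ i : Fin k, ∑ b, M i (x i) b * N i b (z i)) * C z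
  calc ∑ y : ∀ i, κ i, (∏ i : Fin k, M i (x i) (y i)) *
        ∑ z : ∀ i, μ' i, (∏ i : Fin k, N i (y i) (z i)) * C z
      = ∑ y : ∀ i, κ i, ∑ z : ∀ i, μ' i,
          (∏ i : Fin k, M i (x i) (y i) * N i (y i) (z i)) * C z := by
        refine Finset.sum_congr rfl fun y _ => ?_
        rw [Finset.mul_sum]
        refine Finset.sum_congr rfl fun z _ => ?_
        rw [Finset.prod_mul_distrib]; ring
    _ = ∑ z : ∀ i, μ' i, ∑ y : ∀ i, κ i,
          (∏ i : Fin k, M i (x i) (y i) * N i (y i) (z i)) * C z := Finset.sum_comm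
    _ = ∑ z : ∀ i, μ' i, (∏ i : Fin k, ∑ b, M i (x i) b * N i b (z i)) * C z := by
        refine Finset.sum_congr rfl fun z _ => ?_
        rw [Finset.prod_univ_sum, Fintype.piFinset_univ, Finset.sum_mul]

def eSw {α β γ : Type} : ((α × β) × γ) ≃ ((α × γ) × β) where
  toFun p := ((p.1.1, p.2), p.1.2)
  invFun p := ((p.1.1, p.2), p.1.2)
  left_inv p := rfl
  right_inv p := rfl

def eSnoc {α β : Type} (N : ℕ) : (α × (Fin (N + 1) → β)) ≃ ((α × (Fin N → β)) × β) where
  toFun p := ((p.1, fun j => p.2 j.castSucc), p.2 (Fin.last N))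
  invFun q := (q.1.1, Fin.snoc q.1.2 q.2)
  left_inv p := by
    refine Prod.ext rfl ?_
    funext j
    induction j using Fin.lastCases with
    | last => simp
    | cast j => simp
  right_inv q := by
    refine Prod.ext (Prod.ext rfl ?_) (by simp)
    funext j; simp

def eOne {α β : Type} : (α × (Fin 1 → β)) ≃ (α × β) :=
  (Equiv.refl α).prodCongr (Equiv.funUnique (Fin 1) β)

end Aux

/-- If `S ⊠ T` is a degeneration of `S ⊠ U`, then for every `N ≥ 1`,
`S ⊠ T^{⊠N}` is a degeneration of `S ⊠ U^{⊠N}`. -/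
theorem degen_kron_pow {k : ℕ} {ι κ μ : Fin k → Type}
    [∀ i, Fintype (ι i)] [∀ i, Fintype (κ i)] [∀ i, Fintype (μ i)]
    (S : Tensor ι) (T : Tensor κ) (U : Tensor μ)
    (h : Degen (kron S T) (kron S U)) :
    ∀ N : ℕ, 1 ≤ N → Degen (kron S (kpow T N)) (kron S (kpow U N)) := by
  intro N hN
  induction N, hN using Nat.le_induction with
  | base =>
      have hT1 : kron S (kpow T 1) =
          relabel (fun i => (eOne : (ι i × (Fin 1 → κ i)) ≃ (ι i × κ i))) (kron S T) := by
        funext x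
        simp [kron, kpow, relabel, eOne, Fin.prod_univ_one]
      have hU1 : kron S (kpow U 1) =
          relabel (fun i => (eOne : (ι i × (Fin 1 → μ i)) ≃ (ι i × μ i))) (kron S U) := by
        funext x
        simp [kron, kpow, relabel, eOne, Fin.prod_univ_one]
      rw [hT1, hU1]
      exact (h.relabel_left _).relabel_right _
  | succ N hN IH =>
      have hTsplit : kron S (kpow T (N + 1)) =
          relabel (fun i (p : ι i × (Fin (N + 1) → κ i)) =>
            (((p.1, p.2 0), fun j => p.2 j.succ) : (ι i × κ i) × (Fin N → κ i)))
            (kron (kron S T) (kpow T N)) := by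
        funext x
        simp only [kron, kpow, relabel, Fin.prod_univ_succ]
        ring
      have s1 : Degen (kron S (kpow T (N + 1))) (kron (kron S U) (kpow T N)) := by
        rw [hTsplit]
        exact (h.kron (Degen.refl (kpow T N))).relabel_left _
      have hswap : kron (kron S U) (kpow T N) =
          relabel (fun i => ((eSw : ((ι i × μ i) × (Fin N → κ i)) ≃ ((ι i × (Fin N → κ i)) × μ i)) :
            _ → _)) (kron (kron S (kpow T N)) U) := by
        funext x
        simp only [kron, relabel, eSw, Equiv.coe_fn_mk]
        ring
      have s2 : Degen (kron S (kpow T (N + 1))) (kron (kron S (kpow T N)) U) := by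
        refine Degen.of_relabel_right (fun i => eSw) ?_
        rw [← hswap]; exact s1
      have s3 : Degen (kron (kron S (kpow T N)) U) (kron (kron S (kpow U N)) U) :=
        IH.kron (Degen.refl U)
      have s4 := s2.trans s3
      have hUsnoc : kron S (kpow U (N + 1)) =
          relabel (fun i => ((eSnoc N : (ι i × (Fin (N + 1) → μ i)) ≃
            ((ι i × (Fin N → μ i)) × μ i)) : _ → _)) (kron (kron S (kpow U N)) U) := by
        funext x
        simp only [kron, kpow, relabel, eSnoc, Equiv.coe_fn_mk]
        rw [Fin.prod_univ_castSucc]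
        ring
      rw [hUsnoc]
      exact s4.relabel_right _

end
end Subadditivity
end

section
/- Border rank is strictly subadditive under direct sum for tensors of order four: let n₁, n₂, n₃ ≥ 2 be integers with n₁ odd and (n₁−1)(n₂−1)(n₃−1) ≥ 4, let N = (n₁−1)(n₂−1)(n₃−1)/2, let T₁ = Σ_{i₁=0}^{n₁} Σ_{i₂=0}^{n₂} Σ_{i₃=0}^{n₃} e_{i₁} ⊗ e_{i₂} ⊗ e_{i₃} ⊗ e_{(i₁,i₂,i₃)} ∈ ℂ^{n₁+1} ⊗ ℂ^{n₂+1} ⊗ ℂ^{n₃+1} ⊗ ℂ^{(n₁+1)(n₂+1)(n₃+1)} and let T₂ = Σ_{j=1}^{N} e_j ⊗ e_j ⊗ e₀ ⊗ e₀ ∈ ℂ^N ⊗ ℂ^N ⊗ ℂ¹ ⊗ ℂ¹. Then R̲(T₁ ⊕ T₂) < R̲(T₁) + R̲(T₂). -/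
open Finset

namespace Subadditivity

noncomputable section

/-- Kronecker delta. -/
def delta {α : Type} [DecidableEq α] (a b : α) : ℂ := if a = b then 1 else 0

/-- The order-4 "spider" tensor
`Σ_{i₁,i₂,i₃} e_{i₁} ⊗ e_{i₂} ⊗ e_{i₃} ⊗ e_{(i₁,i₂,i₃)} ∈ ℂ^{m₁} ⊗ ℂ^{m₂} ⊗ ℂ^{m₃} ⊗ ℂ^{m₁m₂m₃}`,
the last factor being indexed by triples. -/
def spider3 (m₁ m₂ m₃ : ℕ) :
    Tensor ![Fin m₁, Fin m₂, Fin m₃, Fin m₁ × Fin m₂ × Fin m₃] := fun x =>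
  delta (α := Fin m₁ × Fin m₂ × Fin m₃) (x 3) (x 0, x 1, x 2)

/-- The order-4 tensor `Σ_{j=1}^N e_j ⊗ e_j ⊗ e₀ ⊗ e₀ ∈ ℂ^N ⊗ ℂ^N ⊗ ℂ¹ ⊗ ℂ¹`. -/
def matTensor4 (N : ℕ) : Tensor ![Fin N, Fin N, Fin 1, Fin 1] := fun x =>
  delta (α := Fin N) (x 0) (x 1)

/-- The order-4 tensor `Σ_{ℓ=1}^M e_ℓ ⊗ e_ℓ ⊗ e_ℓ ⊗ e₀ ∈ ℂ^M ⊗ ℂ^M ⊗ ℂ^M ⊗ ℂ¹`. -/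
def ghz4 (M : ℕ) : Tensor ![Fin M, Fin M, Fin M, Fin 1] := fun x =>
  delta (α := Fin M) (x 0) (x 1) * delta (α := Fin M) (x 1) (x 2)

/-!
The lower bounds are flattening bounds: reading `T₁` as a matrix with rows indexed by its last
factor, and `T₂` as a matrix with rows indexed by its first factor, gives identity matrices, while
the determinant of such a flattening vanishes on the closed set of tensors of smaller rank. With
the obvious decompositions, `R̲(T₁) = (n₁+1)(n₂+1)(n₃+1)` and `R̲(T₂) = N`.

For the upper bound write `e_p` for the basis vectors in the factors of `T₁`, `f = e₀ ∈ ℂ¹` for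
the last factor of `T₂`, `𝟙 = Σᵢ eᵢ`, and perturb `T₁ = Σ_p e_{p₁} ⊗ e_{p₂} ⊗ e_{p₃} ⊗ e_p` to
  `Σ_p (e_{p₁} + εX_p) ⊗ (e_{p₂} + εY_p) ⊗ (e_{p₃} + εZ_p) ⊗ (e_p + ε⁻³f) − 𝟙 ⊗ 𝟙 ⊗ 𝟙 ⊗ ε⁻³f`,
of rank `≤ (n₁+1)(n₂+1)(n₃+1) + 1`. Its `e_p`-part tends to `T₁` as `ε → 0`. As
`Σ_p e_{p₁} ⊗ e_{p₂} ⊗ e_{p₃} = 𝟙 ⊗ 𝟙 ⊗ 𝟙`, its `f`-part is exactly `Σ_p X_p ⊗ Y_p ⊗ Z_p ⊗ f`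
once the terms of order `ε` and `ε²` cancel, i.e. once the sums of `X`, `Y`, `Z` over one index of
`p = (p₁, p₂, p₃)` and those of `X ⊗ Y`, `X ⊗ Z`, `Y ⊗ Z` over two indices vanish. Product vectors
built from `e₀, e_{2a+1}, e_{2a+2}` (`2a + 2 ≤ n₁ - 1`) in the first factor and from `e₀, e_{b+1}`,
`e₀, e_{c+1}` in the other two achieve this with `Σ_p X_p ⊗ Y_p ⊗ Z_p = T₂`. Since `N ≥ 2`,
`R̲(T₁ ⊕ T₂) ≤ R̲(T₁) + 1 < R̲(T₁) + R̲(T₂)`.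
-/

open Filter Topology

section General

variable {k : ℕ} {ι κ : Fin k → Type}

theorem HasRankLE.add {T S : Tensor ι} {r s : ℕ} (hT : HasRankLE T r) (hS : HasRankLE S s) :
    HasRankLE (T + S) (r + s) := by
  obtain ⟨v, rfl⟩ := hT
  obtain ⟨w, rfl⟩ := hS
  refine ⟨Fin.append v w, funext fun x => ?_⟩
  simp [Fin.sum_univ_add]

theorem hasRankLE_sum_prod {J : Type} [Fintype J] (v : J → ∀ i, ι i → ℂ) :
    HasRankLE (fun x => ∑ j, ∏ i, v j i (x i)) (Fintype.card J) :=
  ⟨fun t => v ((Fintype.equivFin J).symm t), funext fun x =>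
    (Equiv.sum_comp (Fintype.equivFin J).symm fun j => ∏ i, v j i (x i)).symm⟩

theorem HasRankLE.hasBorderRankLE {T : Tensor ι} {r : ℕ} (h : HasRankLE T r) :
    HasBorderRankLE T r :=
  subset_closure h

theorem borderRank_le {T : Tensor ι} {r : ℕ} (h : HasBorderRankLE T r) : borderRank T ≤ r :=
  Nat.sInf_le h

theorem borderRank_eq {T : Tensor ι} {n : ℕ} (hT : HasRankLE T n)
    (h : ∀ r, HasBorderRankLE T r → n ≤ r) : borderRank T = n :=
  le_antisymm (borderRank_le hT.hasBorderRankLE) (le_csInf ⟨n, hT.hasBorderRankLE⟩ h)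

theorem card_le_of_hasBorderRankLE {β : Type} [Fintype β] [DecidableEq β] {T : Tensor ι}
    {r : ℕ} (Φ : Tensor ι → Matrix β β ℂ) (hΦ : Continuous Φ)
    (hfac : ∀ S, HasRankLE S r →
      ∃ (A : Matrix β (Fin r) ℂ) (B : Matrix (Fin r) β ℂ), Φ S = A * B)
    (hT : HasBorderRankLE T r) (hdet : (Φ T).det ≠ 0) : Fintype.card β ≤ r := by
  by_contra! hr
  have hsing : {S | HasRankLE S r} ⊆ {S : Tensor ι | (Φ S).det = 0} := by
    intro S hS
    obtain ⟨A, B, hAB⟩ := hfac S hS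
    by_contra hne
    have := (Matrix.rank_mul_le_right A B).trans (Matrix.rank_le_card_height B)
    rw [← hAB, Matrix.rank_of_det_ne_zero hne, Fintype.card_fin] at this
    omega
  exact hdet (closure_minimal hsing (isClosed_singleton.preimage hΦ.matrix_det) hT)

def inlVec {α β : Type} (v : α → ℂ) : α ⊕ β → ℂ := Sum.elim v fun _ => 0

def inrVec {α β : Type} (w : β → ℂ) : α ⊕ β → ℂ := Sum.elim (fun _ => 0) w

@[simp] theorem inlVec_inl {α β : Type} (v : α → ℂ) (a : α) :
    inlVec (β := β) v (Sum.inl a) = v a := rfl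

@[simp] theorem inlVec_inr {α β : Type} (v : α → ℂ) (b : β) : inlVec v (Sum.inr b) = 0 := rfl

@[simp] theorem inrVec_inl {α β : Type} (w : β → ℂ) (a : α) : inrVec w (Sum.inl a) = 0 := rfl

@[simp] theorem inrVec_inr {α β : Type} (w : β → ℂ) (b : β) :
    inrVec (α := α) w (Sum.inr b) = w b := rfl

theorem dsum_sum_prod {J L : Type} [Fintype J] [Fintype L] (v : J → ∀ i, ι i → ℂ)
    (w : L → ∀ i, κ i → ℂ) :
    dsum (fun y => ∑ j, ∏ i, v j i (y i)) (fun z => ∑ l, ∏ i, w l i (z i)) = fun x =>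
      ∑ j, ∏ i, inlVec (v j i) (x i) + ∑ l, ∏ i, inrVec (w l i) (x i) := by
  funext x
  unfold dsum
  congr 1
  · by_cases h : ∃ y : ∀ i, ι i, x = fun i => Sum.inl (y i)
    · rw [dif_pos h]
      conv_rhs => rw [h.choose_spec]
      simp only [inlVec_inl]
    · rw [dif_neg h]
      obtain ⟨i, hi⟩ : ∃ i, (x i).isRight := by
        by_contra! hleft
        exact h ⟨fun i => (x i).getLeft (by simpa using hleft i), funext fun i => by simp⟩
      refine (Finset.sum_eq_zero fun j _ => Finset.prod_eq_zero (Finset.mem_univ i) ?_).symm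
      obtain ⟨z, hz⟩ := Sum.isRight_iff.mp hi
      simp [hz]
  · by_cases h : ∃ z : ∀ i, κ i, x = fun i => Sum.inr (z i)
    · rw [dif_pos h]
      conv_rhs => rw [h.choose_spec]
      simp only [inrVec_inr]
    · rw [dif_neg h]
      obtain ⟨i, hi⟩ : ∃ i, (x i).isLeft := by
        by_contra! hright
        exact h ⟨fun i => (x i).getRight (by simpa using hright i), funext fun i => by simp⟩
      refine (Finset.sum_eq_zero fun l _ => Finset.prod_eq_zero (Finset.mem_univ i) ?_).symm
      obtain ⟨y, hy⟩ := Sum.isLeft_iff.mp hi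
      simp [hy]

end General

section OrderFour

variable {ι κ : Fin 4 → Type}

def tuple4 {τ : Fin 4 → Type} (a₀ : τ 0) (a₁ : τ 1) (a₂ : τ 2) (a₃ : τ 3) : ∀ i, τ i :=
  Fin.cons a₀ (Fin.cons a₁ (Fin.cons a₂ (Fin.cons a₃ finZeroElim)))

theorem prod_tuple4 (f₀ : ι 0 → ℂ) (f₁ : ι 1 → ℂ) (f₂ : ι 2 → ℂ) (f₃ : ι 3 → ℂ)
    (x : ∀ i, ι i) :
    ∏ i, tuple4 (τ := fun i => ι i → ℂ) f₀ f₁ f₂ f₃ i (x i) =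
      f₀ (x 0) * f₁ (x 1) * f₂ (x 2) * f₃ (x 3) := by
  rw [Fin.prod_univ_four]
  rfl

theorem hasRankLE_sum_four {J : Type} [Fintype J] (f₀ : J → ι 0 → ℂ) (f₁ : J → ι 1 → ℂ)
    (f₂ : J → ι 2 → ℂ) (f₃ : J → ι 3 → ℂ) :
    HasRankLE (fun x => ∑ j, f₀ j (x 0) * f₁ j (x 1) * f₂ j (x 2) * f₃ j (x 3))
      (Fintype.card J) := by
  simpa only [prod_tuple4] using
    hasRankLE_sum_prod fun j => tuple4 (τ := fun i => ι i → ℂ) (f₀ j) (f₁ j) (f₂ j) (f₃ j)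

theorem hasRankLE_four (f₀ : ι 0 → ℂ) (f₁ : ι 1 → ℂ) (f₂ : ι 2 → ℂ) (f₃ : ι 3 → ℂ) :
    HasRankLE (fun x => f₀ (x 0) * f₁ (x 1) * f₂ (x 2) * f₃ (x 3)) 1 := by
  simpa using hasRankLE_sum_four (J := Unit) (fun _ => f₀) (fun _ => f₁) (fun _ => f₂)
    (fun _ => f₃)

theorem dsum_sum_four {J L : Type} [Fintype J] [Fintype L] (f₀ : J → ι 0 → ℂ)
    (f₁ : J → ι 1 → ℂ) (f₂ : J → ι 2 → ℂ) (f₃ : J → ι 3 → ℂ) (g₀ : L → κ 0 → ℂ)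
    (g₁ : L → κ 1 → ℂ) (g₂ : L → κ 2 → ℂ) (g₃ : L → κ 3 → ℂ) :
    dsum (fun y => ∑ j, f₀ j (y 0) * f₁ j (y 1) * f₂ j (y 2) * f₃ j (y 3))
        (fun z => ∑ l, g₀ l (z 0) * g₁ l (z 1) * g₂ l (z 2) * g₃ l (z 3)) = fun x =>
      ∑ j, inlVec (f₀ j) (x 0) * inlVec (f₁ j) (x 1) * inlVec (f₂ j) (x 2) *
          inlVec (f₃ j) (x 3) +
        ∑ l, inrVec (g₀ l) (x 0) * inrVec (g₁ l) (x 1) * inrVec (g₂ l) (x 2) *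
          inrVec (g₃ l) (x 3) := by
  have := dsum_sum_prod (fun j => tuple4 (τ := fun i => ι i → ℂ) (f₀ j) (f₁ j) (f₂ j) (f₃ j))
    (fun l => tuple4 (τ := fun i => κ i → ℂ) (g₀ l) (g₁ l) (g₂ l) (g₃ l))
  simp only [prod_tuple4] at this
  rw [this]
  funext x
  simp only [Fin.prod_univ_four]
  rfl

end OrderFour

section Delta

variable {α : Type} [DecidableEq α]

theorem delta_comm (a b : α) : delta a b = delta b a := by
  simp [delta, eq_comm]

theorem delta_map {β : Type} [DecidableEq β] {f : α → β} (hf : Function.Injective f)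
    (a b : α) : delta (f a) (f b) = delta a b := by
  simp [delta, hf.eq_iff]

theorem delta_val {n : ℕ} (a b : Fin n) : delta (a : ℕ) b = delta a b :=
  delta_map Fin.val_injective a b

theorem delta_add_one (a b : ℕ) : delta (a + 1) (b + 1) = delta a b :=
  delta_map Nat.succ_injective a b

theorem delta_add_one_zero (a : ℕ) : delta (a + 1) 0 = 0 := by
  simp [delta]

theorem delta_fst_mul_delta_snd {β γ : Type} [DecidableEq β] [DecidableEq γ] (p : α × β × γ)
    (a : α) (b : β) (c : γ) :
    delta p.1 a * delta p.2.1 b * delta p.2.2 c = delta p (a, b, c) := by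
  simp only [delta, Prod.ext_iff, ite_and]
  split_ifs <;> simp

theorem sum_delta_mul [Fintype α] (a : α) (f : α → ℂ) : ∑ x, delta x a * f x = f a := by
  simp [delta]

variable {m a : ℕ}

theorem sum_range_delta (h : a < m) : ∑ n ∈ range m, delta n a = 1 := by
  simp [delta, h]

theorem sum_range_delta_mul (h : a < m) (f : ℕ → ℂ) :
    ∑ n ∈ range m, delta n a * f n = f a := by
  simp [delta, h]

theorem sum_range_delta_mul_mul (h : a < m) (f g : ℕ → ℂ) :
    ∑ n ∈ range m, delta n a * f n * g n = f a * g a := by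
  simp only [mul_assoc, sum_range_delta_mul h]

end Delta

section Summands

theorem spider3_eq_sum (m₁ m₂ m₃ : ℕ) :
    spider3 m₁ m₂ m₃ = fun x => ∑ p : Fin m₁ × Fin m₂ × Fin m₃,
      delta p.1 (x 0) * delta p.2.1 (x 1) * delta p.2.2 (x 2) * delta p (x 3) := by
  funext x
  rw [Finset.sum_congr rfl fun p _ => by rw [delta_fst_mul_delta_snd p (x 0) (x 1) (x 2)]]
  exact (delta_comm _ _).trans
    (sum_delta_mul (α := Fin m₁ × Fin m₂ × Fin m₃) _ fun p => delta p (x 3)).symm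

theorem hasRankLE_spider3 (m₁ m₂ m₃ : ℕ) : HasRankLE (spider3 m₁ m₂ m₃) (m₁ * m₂ * m₃) := by
  rw [spider3_eq_sum]
  simpa [mul_assoc] using hasRankLE_sum_four
    (ι := ![Fin m₁, Fin m₂, Fin m₃, Fin m₁ × Fin m₂ × Fin m₃])
    (fun p : Fin m₁ × Fin m₂ × Fin m₃ => (delta p.1 : Fin m₁ → ℂ))
    (fun p => (delta p.2.1 : Fin m₂ → ℂ)) (fun p => (delta p.2.2 : Fin m₃ → ℂ))
    (fun p => (delta p : Fin m₁ × Fin m₂ × Fin m₃ → ℂ))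

theorem le_of_hasBorderRankLE_spider3 {m₁ m₂ m₃ r : ℕ}
    (h : HasBorderRankLE (spider3 m₁ m₂ m₃) r) : m₁ * m₂ * m₃ ≤ r := by
  let Φ : Tensor ![Fin m₁, Fin m₂, Fin m₃, Fin m₁ × Fin m₂ × Fin m₃] →
      Matrix (Fin m₁ × Fin m₂ × Fin m₃) (Fin m₁ × Fin m₂ × Fin m₃) ℂ :=
    fun T => Matrix.of fun d e => T (tuple4 e.1 e.2.1 e.2.2 d)
  have hΦ : Φ (spider3 m₁ m₂ m₃) = 1 := by
    ext d e
    simp only [Φ, Matrix.of_apply, spider3, delta, Matrix.one_apply]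
    rfl
  have hfac : ∀ S, HasRankLE S r → ∃ (A : Matrix (Fin m₁ × Fin m₂ × Fin m₃) (Fin r) ℂ)
      (B : Matrix (Fin r) (Fin m₁ × Fin m₂ × Fin m₃) ℂ), Φ S = A * B := by
    rintro S ⟨v, rfl⟩
    refine ⟨Matrix.of fun d j => v j 3 d,
      Matrix.of fun j e => v j 0 e.1 * v j 1 e.2.1 * v j 2 e.2.2, ?_⟩
    ext d e
    simp only [Φ, Matrix.mul_apply, Matrix.of_apply, Fin.prod_univ_four]
    exact Finset.sum_congr rfl fun j _ => mul_comm _ _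
  simpa [mul_assoc] using card_le_of_hasBorderRankLE Φ
    (continuous_matrix fun _ _ => continuous_apply _) hfac h (by simp [hΦ])

theorem borderRank_spider3 (m₁ m₂ m₃ : ℕ) :
    borderRank (spider3 m₁ m₂ m₃) = m₁ * m₂ * m₃ :=
  borderRank_eq (hasRankLE_spider3 m₁ m₂ m₃) fun _ => le_of_hasBorderRankLE_spider3

theorem matTensor4_eq_sum (N : ℕ) :
    matTensor4 N = fun x => ∑ t : Fin N, delta t (x 0) * delta t (x 1) * 1 * 1 := by
  funext x
  simp_rw [mul_one]
  exact (sum_delta_mul (α := Fin N) (x 0) fun t => delta t (x 1)).symm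

theorem hasRankLE_matTensor4 (N : ℕ) : HasRankLE (matTensor4 N) N := by
  rw [matTensor4_eq_sum]
  simpa using hasRankLE_sum_four (ι := ![Fin N, Fin N, Fin 1, Fin 1])
    (fun t : Fin N => (delta t : Fin N → ℂ)) (fun t => (delta t : Fin N → ℂ))
    (fun _ _ => 1) (fun _ _ => 1)

theorem le_of_hasBorderRankLE_matTensor4 {N r : ℕ} (h : HasBorderRankLE (matTensor4 N) r) :
    N ≤ r := by
  let Φ : Tensor ![Fin N, Fin N, Fin 1, Fin 1] → Matrix (Fin N) (Fin N) ℂ :=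
    fun T => Matrix.of fun a b => T (tuple4 a b (0 : Fin 1) (0 : Fin 1))
  have hΦ : Φ (matTensor4 N) = 1 := by
    ext a b
    simp only [Φ, Matrix.of_apply, matTensor4, delta, Matrix.one_apply]
    rfl
  have hfac : ∀ S, HasRankLE S r →
      ∃ (A : Matrix (Fin N) (Fin r) ℂ) (B : Matrix (Fin r) (Fin N) ℂ), Φ S = A * B := by
    rintro S ⟨v, rfl⟩
    refine ⟨Matrix.of fun a j => v j 0 a,
      Matrix.of fun j b => v j 1 b * v j 2 (0 : Fin 1) * v j 3 (0 : Fin 1), ?_⟩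
    ext a b
    simp only [Φ, Matrix.mul_apply, Matrix.of_apply, Fin.prod_univ_four, mul_assoc]
    rfl
  simpa using card_le_of_hasBorderRankLE Φ
    (continuous_matrix fun _ _ => continuous_apply _) hfac h (by simp [hΦ])

theorem borderRank_matTensor4 (N : ℕ) : borderRank (matTensor4 N) = N :=
  borderRank_eq (hasRankLE_matTensor4 N) fun _ => le_of_hasBorderRankLE_matTensor4

end Summands

structure SpiderPerturbation (m₁ m₂ m₃ : ℕ) (κ₀ κ₁ κ₂ : Type) where
  X : Fin m₁ × Fin m₂ × Fin m₃ → κ₀ → ℂ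
  Y : Fin m₁ × Fin m₂ × Fin m₃ → κ₁ → ℂ
  Z : Fin m₁ × Fin m₂ × Fin m₃ → κ₂ → ℂ
  sum_X : ∀ j k s, ∑ i, X (i, j, k) s = 0
  sum_Y : ∀ i k t, ∑ j, Y (i, j, k) t = 0
  sum_Z : ∀ i j u, ∑ k, Z (i, j, k) u = 0
  sum_XY : ∀ k s t, ∑ i, ∑ j, X (i, j, k) s * Y (i, j, k) t = 0
  sum_XZ : ∀ j s u, ∑ i, ∑ k, X (i, j, k) s * Z (i, j, k) u = 0
  sum_YZ : ∀ i t u, ∑ j, ∑ k, Y (i, j, k) t * Z (i, j, k) u = 0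

namespace SpiderPerturbation

variable {m₁ m₂ m₃ : ℕ} {κ₀ κ₁ κ₂ : Type} (D : SpiderPerturbation m₁ m₂ m₃ κ₀ κ₁ κ₂)

def tensor : Tensor ![κ₀, κ₁, κ₂, Fin 1] := fun x =>
  ∑ p, D.X p (x 0) * D.Y p (x 1) * D.Z p (x 2)

def pertProd (ε : ℂ) (p : Fin m₁ × Fin m₂ × Fin m₃) (x₀ : Fin m₁ ⊕ κ₀) (x₁ : Fin m₂ ⊕ κ₁)
    (x₂ : Fin m₃ ⊕ κ₂) : ℂ :=
  (inlVec (delta p.1) x₀ + ε * inrVec (D.X p) x₀) *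
    (inlVec (delta p.2.1) x₁ + ε * inrVec (D.Y p) x₁) *
    (inlVec (delta p.2.2) x₂ + ε * inrVec (D.Z p) x₂)

theorem sum_pertProd (ε : ℂ) (x₀ : Fin m₁ ⊕ κ₀) (x₁ : Fin m₂ ⊕ κ₁) (x₂ : Fin m₃ ⊕ κ₂) :
    ∑ p, D.pertProd ε p x₀ x₁ x₂ =
      inlVec 1 x₀ * inlVec 1 x₁ * inlVec 1 x₂ +
        ε ^ 3 * ∑ p, inrVec (D.X p) x₀ * inrVec (D.Y p) x₁ * inrVec (D.Z p) x₂ := by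
  have h₂ : ∀ a b : ℂ, ε * a * (ε * b) = ε ^ 2 * (a * b) := fun a b => by ring
  have h₃ : ∀ a b : ℂ, ε ^ 2 * a * (ε * b) = ε ^ 3 * (a * b) := fun a b => by ring
  -- In each of the eight cases the deltas collapse the sum to one of the defining sums of `D`.
  -- They are unfolded only after the projections of `p` are reduced: otherwise the decidability
  -- instances of the resulting `if`s mention the summation index and `sum_ite_irrel` is stuck.
  rcases x₀ with i | s <;> rcases x₁ with j | t <;> rcases x₂ with k | u <;>
    simp only [pertProd, inlVec_inl, inlVec_inr, inrVec_inl, inrVec_inr,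
      Fintype.sum_prod_type] <;>
    simp only [delta, Pi.one_apply, mul_zero, add_zero, zero_add, ite_mul, mul_ite, one_mul,
      mul_one, zero_mul, h₂, h₃, Finset.sum_ite_irrel, Finset.sum_const_zero, Finset.sum_ite_eq',
      Finset.mem_univ, if_true, ← Finset.mul_sum, D.sum_X, D.sum_Y, D.sum_Z, D.sum_XY, D.sum_XZ,
      D.sum_YZ]

def limit (x₀ : Fin m₁ ⊕ κ₀) (x₁ : Fin m₂ ⊕ κ₁) (x₂ : Fin m₃ ⊕ κ₂)
    (x₃ : (Fin m₁ × Fin m₂ × Fin m₃) ⊕ Fin 1) : ℂ :=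
  (∑ p, inlVec (delta p.1) x₀ * inlVec (delta p.2.1) x₁ * inlVec (delta p.2.2) x₂ *
      inlVec (delta p) x₃) +
    ∑ p, inrVec (D.X p) x₀ * inrVec (D.Y p) x₁ * inrVec (D.Z p) x₂ * inrVec 1 x₃

theorem dsum_spider3_tensor :
    dsum (spider3 m₁ m₂ m₃) D.tensor = fun x => D.limit (x 0) (x 1) (x 2) (x 3) := by
  have hS : D.tensor = fun z => ∑ p, D.X p (z 0) * D.Y p (z 1) * D.Z p (z 2) * 1 := by
    simp only [mul_one]
    rfl
  rw [spider3_eq_sum, hS]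
  exact dsum_sum_four (ι := ![Fin m₁, Fin m₂, Fin m₃, Fin m₁ × Fin m₂ × Fin m₃])
    (κ := ![κ₀, κ₁, κ₂, Fin 1]) (fun p : Fin m₁ × Fin m₂ × Fin m₃ => (delta p.1 : Fin m₁ → ℂ))
    (fun p => (delta p.2.1 : Fin m₂ → ℂ)) (fun p => (delta p.2.2 : Fin m₃ → ℂ))
    (fun p => (delta p : Fin m₁ × Fin m₂ × Fin m₃ → ℂ)) D.X D.Y D.Z (fun _ => 1)

def approx (ε : ℂ) (x₀ : Fin m₁ ⊕ κ₀) (x₁ : Fin m₂ ⊕ κ₁) (x₂ : Fin m₃ ⊕ κ₂)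
    (x₃ : (Fin m₁ × Fin m₂ × Fin m₃) ⊕ Fin 1) : ℂ :=
  (∑ p, D.pertProd ε p x₀ x₁ x₂ * (inlVec (delta p) x₃ + ε⁻¹ ^ 3 * inrVec 1 x₃)) +
    -inlVec 1 x₀ * inlVec 1 x₁ * inlVec 1 x₂ * (ε⁻¹ ^ 3 * inrVec 1 x₃)

theorem approx_hasRankLE (ε : ℂ) :
    HasRankLE (ι := fun i => ![Fin m₁, Fin m₂, Fin m₃, Fin m₁ × Fin m₂ × Fin m₃] i ⊕
        ![κ₀, κ₁, κ₂, Fin 1] i)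
      (fun x => D.approx ε (x 0) (x 1) (x 2) (x 3)) (m₁ * m₂ * m₃ + 1) := by
  have hsum := hasRankLE_sum_four
    (ι := fun i => ![Fin m₁, Fin m₂, Fin m₃, Fin m₁ × Fin m₂ × Fin m₃] i ⊕
      ![κ₀, κ₁, κ₂, Fin 1] i)
    (fun (p : Fin m₁ × Fin m₂ × Fin m₃) (t : Fin m₁ ⊕ κ₀) =>
      inlVec (delta p.1) t + ε * inrVec (D.X p) t)
    (fun p (t : Fin m₂ ⊕ κ₁) => inlVec (delta p.2.1) t + ε * inrVec (D.Y p) t)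
    (fun p (t : Fin m₃ ⊕ κ₂) => inlVec (delta p.2.2) t + ε * inrVec (D.Z p) t)
    (fun p (t : (Fin m₁ × Fin m₂ × Fin m₃) ⊕ Fin 1) =>
      inlVec (delta p) t + ε⁻¹ ^ 3 * inrVec 1 t)
  have hone := hasRankLE_four
    (ι := fun i => ![Fin m₁, Fin m₂, Fin m₃, Fin m₁ × Fin m₂ × Fin m₃] i ⊕
      ![κ₀, κ₁, κ₂, Fin 1] i)
    (fun t : Fin m₁ ⊕ κ₀ => -inlVec 1 t) (fun t : Fin m₂ ⊕ κ₁ => inlVec 1 t)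
    (fun t : Fin m₃ ⊕ κ₂ => inlVec 1 t)
    (fun t : (Fin m₁ × Fin m₂ × Fin m₃) ⊕ Fin 1 => ε⁻¹ ^ 3 * inrVec 1 t)
  have hcard : Fintype.card (Fin m₁ × Fin m₂ × Fin m₃) = m₁ * m₂ * m₃ := by simp [mul_assoc]
  exact hcard ▸ hsum.add hone

theorem tendsto_approx (x₀ : Fin m₁ ⊕ κ₀) (x₁ : Fin m₂ ⊕ κ₁) (x₂ : Fin m₃ ⊕ κ₂)
    (x₃ : (Fin m₁ × Fin m₂ × Fin m₃) ⊕ Fin 1) :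
    Tendsto (fun ε => D.approx ε x₀ x₁ x₂ x₃) (𝓝[≠] 0) (𝓝 (D.limit x₀ x₁ x₂ x₃)) := by
  set B := ∑ p, inrVec (D.X p) x₀ * inrVec (D.Y p) x₁ * inrVec (D.Z p) x₂
  let A : ℂ → ℂ := fun ε => ∑ p, D.pertProd ε p x₀ x₁ x₂ * inlVec (delta p) x₃
  have hA : Continuous A := by
    simp only [A, pertProd]
    fun_prop
  have happrox : ∀ ε ≠ 0, D.approx ε x₀ x₁ x₂ x₃ = A ε + B * inrVec 1 x₃ := by
    intro ε hε
    simp only [approx, A, mul_add, Finset.sum_add_distrib, ← Finset.sum_mul, sum_pertProd]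
    field_simp
    ring
  have hlimit : D.limit x₀ x₁ x₂ x₃ = A 0 + B * inrVec 1 x₃ := by
    simp only [limit, A, B, pertProd, zero_mul, add_zero, Finset.sum_mul]
  rw [hlimit]
  exact (((hA.tendsto 0).mono_left nhdsWithin_le_nhds).add_const _).congr'
    (eventually_nhdsWithin_of_forall fun ε hε => (happrox ε hε).symm)

theorem hasBorderRankLE_dsum :
    HasBorderRankLE (dsum (spider3 m₁ m₂ m₃) D.tensor) (m₁ * m₂ * m₃ + 1) := by
  rw [dsum_spider3_tensor]
  exact mem_closure_of_tendsto
    (tendsto_pi_nhds.2 fun x => D.tendsto_approx (x 0) (x 1) (x 2) (x 3))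
    (Eventually.of_forall D.approx_hasRankLE)

end SpiderPerturbation

section ProductVectors

def prod3 {m₁ m₂ m₃ : ℕ} (f g h : ℕ → ℂ) (p : Fin m₁ × Fin m₂ × Fin m₃) : ℂ :=
  f p.1 * g p.2.1 * h p.2.2

variable {m₁ m₂ m₃ : ℕ} (f g h : ℕ → ℂ)

theorem prod3_mul (f' g' h' : ℕ → ℂ) (p : Fin m₁ × Fin m₂ × Fin m₃) :
    prod3 f g h p * prod3 f' g' h' p = prod3 (f * f') (g * g') (h * h') p := by
  simp only [prod3, Pi.mul_apply]
  ring

theorem sum_prod3_fst (j : Fin m₂) (k : Fin m₃) :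
    ∑ i : Fin m₁, prod3 f g h (i, j, k) = (∑ n ∈ range m₁, f n) * g j * h k := by
  simp only [prod3, ← Finset.sum_mul, Fin.sum_univ_eq_sum_range f]

theorem sum_prod3_snd (i : Fin m₁) (k : Fin m₃) :
    ∑ j : Fin m₂, prod3 f g h (i, j, k) = f i * (∑ n ∈ range m₂, g n) * h k := by
  simp only [prod3, ← Finset.sum_mul, ← Finset.mul_sum, Fin.sum_univ_eq_sum_range g]

theorem sum_prod3_thd (i : Fin m₁) (j : Fin m₂) :
    ∑ k : Fin m₃, prod3 f g h (i, j, k) = f i * g j * ∑ n ∈ range m₃, h n := by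
  simp only [prod3, ← Finset.mul_sum, Fin.sum_univ_eq_sum_range h]

theorem sum_prod3_fst_snd (k : Fin m₃) :
    ∑ i : Fin m₁, ∑ j : Fin m₂, prod3 f g h (i, j, k) =
      (∑ n ∈ range m₁, f n) * (∑ n ∈ range m₂, g n) * h k := by
  simp only [sum_prod3_snd, ← Finset.sum_mul, Fin.sum_univ_eq_sum_range f]

theorem sum_prod3_fst_thd (j : Fin m₂) :
    ∑ i : Fin m₁, ∑ k : Fin m₃, prod3 f g h (i, j, k) =
      (∑ n ∈ range m₁, f n) * g j * ∑ n ∈ range m₃, h n := by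
  simp only [sum_prod3_thd, ← Finset.sum_mul, Fin.sum_univ_eq_sum_range f]

theorem sum_prod3_snd_thd (i : Fin m₁) :
    ∑ j : Fin m₂, ∑ k : Fin m₃, prod3 f g h (i, j, k) =
      f i * (∑ n ∈ range m₂, g n) * ∑ n ∈ range m₃, h n := by
  simp only [sum_prod3_thd, ← Finset.sum_mul, ← Finset.mul_sum, Fin.sum_univ_eq_sum_range g]

theorem sum_prod3 :
    ∑ p : Fin m₁ × Fin m₂ × Fin m₃, prod3 f g h p =
      (∑ n ∈ range m₁, f n) * (∑ n ∈ range m₂, g n) * ∑ n ∈ range m₃, h n := by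
  simp only [Fintype.sum_prod_type, sum_prod3_snd_thd, ← Finset.sum_mul,
    Fin.sum_univ_eq_sum_range f]

end ProductVectors

section FirstFactor

def chi (a n : ℕ) : ℂ := delta n (2 * a + 1) + delta n (2 * a + 2) - 2 * delta n 0

def psi (a n : ℕ) : ℂ := delta n (2 * a + 1) - delta n (2 * a + 2)

def halfSign (n : ℕ) : ℂ := if n = 0 then 0 else (-1) ^ (n + 1) / 2

theorem psi_apply_odd (a b : ℕ) : psi b (2 * a + 1) = delta a b := by
  rw [psi, delta, delta, if_neg (by omega : 2 * a + 1 ≠ 2 * b + 2)]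
  simp [delta]

theorem psi_apply_even (a b : ℕ) : psi b (2 * a + 2) = -delta a b := by
  rw [psi, delta, delta, if_neg (by omega : 2 * a + 2 ≠ 2 * b + 1)]
  simp [delta]

theorem psi_apply_zero (b : ℕ) : psi b 0 = 0 := by
  simp [psi, delta]

theorem halfSign_odd (a : ℕ) : halfSign (2 * a + 1) = 1 / 2 := by
  simp [halfSign, pow_succ, pow_mul]

theorem halfSign_even (a : ℕ) : halfSign (2 * a + 2) = -1 / 2 := by
  simp [halfSign, pow_succ, pow_mul]

theorem halfSign_zero : halfSign 0 = 0 := rfl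

variable {m a : ℕ}

theorem sum_chi_mul (h : 2 * a + 2 < m) (f : ℕ → ℂ) :
    ∑ n ∈ range m, chi a n * f n = f (2 * a + 1) + f (2 * a + 2) - 2 * f 0 := by
  simp only [chi, add_mul, sub_mul, mul_assoc, Finset.sum_add_distrib, Finset.sum_sub_distrib,
    ← Finset.mul_sum, sum_range_delta_mul (by omega : 2 * a + 1 < m), sum_range_delta_mul h,
    sum_range_delta_mul (by omega : 0 < m)]

theorem sum_chi (h : 2 * a + 2 < m) : ∑ n ∈ range m, chi a n = 0 := by
  simpa [one_add_one_eq_two] using sum_chi_mul h 1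

theorem sum_chi_mul_psi (h : 2 * a + 2 < m) (b : ℕ) : ∑ n ∈ range m, chi a n * psi b n = 0 := by
  rw [sum_chi_mul h, psi_apply_odd, psi_apply_even, psi_apply_zero]
  ring

theorem sum_chi_mul_halfSign (h : 2 * a + 2 < m) : ∑ n ∈ range m, chi a n * halfSign n = 0 := by
  rw [sum_chi_mul h, halfSign_odd, halfSign_even, halfSign_zero]
  ring

theorem sum_chi_mul_psi_mul_halfSign (h : 2 * a + 2 < m) (b : ℕ) :
    ∑ n ∈ range m, chi a n * psi b n * halfSign n = delta a b := by
  simp only [mul_assoc]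
  rw [sum_chi_mul h, psi_apply_odd, psi_apply_even, psi_apply_zero, halfSign_odd, halfSign_even]
  ring

end FirstFactor

section MatTensor4

def finTripleEquiv (q e₂ e₃ : ℕ) : Fin (q * e₂ * e₃) ≃ Fin q × Fin e₂ × Fin e₃ :=
  finProdFinEquiv.symm.trans
    ((finProdFinEquiv.symm.prodCongr (Equiv.refl _)).trans (Equiv.prodAssoc _ _ _))

variable {m₁ m₂ m₃ : ℕ}

/-- With `t ↔ (a, b, c)`, each condition holds because one of its factor sums vanishes: those of
`chi a`, `chi a * psi a'` and `chi a * halfSign` over the first index, that of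
`e_{b+1} − e₀` over the second, that of `1 − m₃ e₀` over the third. -/
def matTensor4Perturbation (q e₂ e₃ : ℕ) (h₁ : 2 * q + 1 ≤ m₁) (h₂ : e₂ + 1 ≤ m₂)
    (h₃ : e₃ + 1 ≤ m₃) :
    SpiderPerturbation m₁ m₂ m₃ (Fin (q * e₂ * e₃)) (Fin (q * e₂ * e₃)) (Fin 1) where
  X p t := prod3 (chi (finTripleEquiv q e₂ e₃ t).1)
    (fun n => delta n ((finTripleEquiv q e₂ e₃ t).2.1 + 1))
    (fun n => delta n ((finTripleEquiv q e₂ e₃ t).2.2 + 1)) p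
  Y p t := prod3 (psi (finTripleEquiv q e₂ e₃ t).1)
    (fun n => delta n ((finTripleEquiv q e₂ e₃ t).2.1 + 1) - delta n 0)
    (fun n => delta n ((finTripleEquiv q e₂ e₃ t).2.2 + 1)) p
  Z p _ := prod3 halfSign 1 (fun n => 1 - m₃ * delta n 0) p
  sum_X j k t := by
    rw [sum_prod3_fst, sum_chi (by omega), zero_mul, zero_mul]
  sum_Y i k t := by
    rw [sum_prod3_snd, Finset.sum_sub_distrib, sum_range_delta (by omega),
      sum_range_delta (by omega), sub_self, mul_zero, zero_mul]
  sum_Z i j u := by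
    rw [sum_prod3_thd, Finset.sum_sub_distrib, ← Finset.mul_sum, sum_range_delta (by omega)]
    simp
  sum_XY k s t := by
    simp only [prod3_mul]
    rw [sum_prod3_fst_snd]
    simp only [Pi.mul_apply]
    rw [sum_chi_mul_psi (by omega), zero_mul, zero_mul]
  sum_XZ j s u := by
    simp only [prod3_mul]
    rw [sum_prod3_fst_thd]
    simp only [Pi.mul_apply]
    rw [sum_chi_mul_halfSign (by omega), zero_mul, zero_mul]
  sum_YZ i t u := by
    simp only [prod3_mul]
    rw [sum_prod3_snd_thd]
    simp only [Pi.mul_apply, Pi.one_apply, mul_one]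
    rw [Finset.sum_sub_distrib, sum_range_delta (by omega), sum_range_delta (by omega), sub_self,
      mul_zero, zero_mul]

theorem matTensor4Perturbation_tensor (q e₂ e₃ : ℕ) (h₁ : 2 * q + 1 ≤ m₁) (h₂ : e₂ + 1 ≤ m₂)
    (h₃ : e₃ + 1 ≤ m₃) :
    (matTensor4Perturbation q e₂ e₃ h₁ h₂ h₃).tensor = matTensor4 (q * e₂ * e₃) := by
  funext x
  simp only [SpiderPerturbation.tensor, matTensor4Perturbation, prod3_mul]
  rw [sum_prod3]
  simp only [Pi.mul_apply, Pi.one_apply, mul_one]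
  rw [sum_chi_mul_psi_mul_halfSign (by omega), sum_range_delta_mul (by omega),
    sum_range_delta_mul_mul (by omega)]
  simp only [delta_add_one, delta_val, delta_add_one_zero, sub_zero, mul_zero, mul_one]
  rw [delta_fst_mul_delta_snd]
  exact delta_map (finTripleEquiv q e₂ e₃).injective (x 0) (x 1)

theorem hasBorderRankLE_dsum_spider3_matTensor4 {q e₂ e₃ : ℕ} (h₁ : 2 * q + 1 ≤ m₁)
    (h₂ : e₂ + 1 ≤ m₂) (h₃ : e₃ + 1 ≤ m₃) :
    HasBorderRankLE (dsum (spider3 m₁ m₂ m₃) (matTensor4 (q * e₂ * e₃))) (m₁ * m₂ * m₃ + 1) :=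
  matTensor4Perturbation_tensor q e₂ e₃ h₁ h₂ h₃ ▸
    (matTensor4Perturbation q e₂ e₃ h₁ h₂ h₃).hasBorderRankLE_dsum

end MatTensor4

theorem strict_subadditivity_order_four_general (n₁ n₂ n₃ N : ℕ)
    (hodd : Odd n₁)
    (hbig : 4 ≤ (n₁ - 1) * (n₂ - 1) * (n₃ - 1))
    (hN : N = (n₁ - 1) * (n₂ - 1) * (n₃ - 1) / 2) :
    borderRank (dsum (spider3 (n₁ + 1) (n₂ + 1) (n₃ + 1)) (matTensor4 N)) <
      borderRank (spider3 (n₁ + 1) (n₂ + 1) (n₃ + 1)) + borderRank (matTensor4 N) := by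
  obtain ⟨q, rfl⟩ := hodd
  have hprod : (2 * q + 1 - 1) * (n₂ - 1) * (n₃ - 1) = 2 * (q * (n₂ - 1) * (n₃ - 1)) := by
    rw [Nat.add_sub_cancel]
    ring
  rw [hprod] at hbig hN
  rw [Nat.mul_div_cancel_left _ two_pos] at hN
  subst hN
  have hupper := borderRank_le (hasBorderRankLE_dsum_spider3_matTensor4
    (m₁ := 2 * q + 1 + 1) (m₂ := n₂ + 1) (m₃ := n₃ + 1) (q := q) (e₂ := n₂ - 1) (e₃ := n₃ - 1)
    (by omega) (by omega) (by omega))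
  rw [borderRank_spider3, borderRank_matTensor4]
  omega

/-- Strict subadditivity of border rank under direct sum for tensors of
order four: with `n₁, n₂, n₃ ≥ 2`, `n₁` odd, `(n₁−1)(n₂−1)(n₃−1) ≥ 4` and
`N = (n₁−1)(n₂−1)(n₃−1)/2`, we have `R̲(T₁ ⊕ T₂) < R̲(T₁) + R̲(T₂)`. -/
theorem strict_subadditivity_order_four (n₁ n₂ n₃ N : ℕ)
    (h₁ : 2 ≤ n₁) (h₂ : 2 ≤ n₂) (h₃ : 2 ≤ n₃) (hodd : Odd n₁)
    (hbig : 4 ≤ (n₁ - 1) * (n₂ - 1) * (n₃ - 1))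
    (hN : N = (n₁ - 1) * (n₂ - 1) * (n₃ - 1) / 2) :
    borderRank (dsum (spider3 (n₁ + 1) (n₂ + 1) (n₃ + 1)) (matTensor4 N)) <
      borderRank (spider3 (n₁ + 1) (n₂ + 1) (n₃ + 1)) + borderRank (matTensor4 N) :=
  strict_subadditivity_order_four_general n₁ n₂ n₃ N hodd hbig hN

end
end Subadditivity
end

section
/- Let n₁, n₂, n₃ be even positive integers. Then the independence condition holds for (n₁, n₂, n₃, M) with M = n₁n₂n₃/4, and it does not hold for any M > n₁n₂n₃/4; that is, the maximum M for which the independence condition holds equals n₁n₂n₃/4. -/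
open Finset

namespace Subadditivity

noncomputable section

/-- The combinatorial independence condition of Construction 4: there exist pairwise
disjoint subsets `J, K₁, K₂, K₃` of `[n₁] × [n₂] × [n₃]`, each of cardinality `M`,
together with bijections `s_i : J → K_i` such that `s_i` fixes the `i`-th coordinate. -/
def IndepCond (n₁ n₂ n₃ M : ℕ) : Prop :=
  ∃ (J K₁ K₂ K₃ : Finset (Fin n₁ × Fin n₂ × Fin n₃))
    (s₁ s₂ s₃ : Fin n₁ × Fin n₂ × Fin n₃ → Fin n₁ × Fin n₂ × Fin n₃),
    J.card = M ∧ K₁.card = M ∧ K₂.card = M ∧ K₃.card = M ∧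
    Disjoint J K₁ ∧ Disjoint J K₂ ∧ Disjoint J K₃ ∧
    Disjoint K₁ K₂ ∧ Disjoint K₁ K₃ ∧ Disjoint K₂ K₃ ∧
    Set.BijOn s₁ ↑J ↑K₁ ∧ Set.BijOn s₂ ↑J ↑K₂ ∧ Set.BijOn s₃ ↑J ↑K₃ ∧
    (∀ x ∈ J, (s₁ x).1 = x.1) ∧
    (∀ x ∈ J, (s₂ x).2.1 = x.2.1) ∧
    (∀ x ∈ J, (s₃ x).2.2 = x.2.2)

/-- Parity flip on `Fin n` for `n` even: swaps `2j ↔ 2j+1`. -/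
def pflip {n : ℕ} (hn : Even n) (x : Fin n) : Fin n :=
  ⟨if x.val % 2 = 0 then x.val + 1 else x.val - 1, by
    obtain ⟨m, rfl⟩ := hn
    have := x.isLt
    split <;> omega⟩

lemma pflip_val_mod {n : ℕ} (hn : Even n) (x : Fin n) :
    (pflip hn x).val % 2 = 1 - x.val % 2 := by
  simp only [pflip]
  split <;> omega

lemma pflip_pflip {n : ℕ} (hn : Even n) (x : Fin n) : pflip hn (pflip hn x) = x := by
  apply Fin.ext
  simp only [pflip]
  split_ifs <;> omega

/-- Lemma 3.1. For `n₁, n₂, n₃` even and positive, the maximum `M`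
for which the independence condition holds is exactly `n₁n₂n₃/4`. -/
theorem indepCond_max (n₁ n₂ n₃ : ℕ) (h₁ : 0 < n₁) (h₂ : 0 < n₂) (h₃ : 0 < n₃)
    (e₁ : Even n₁) (e₂ : Even n₂) (e₃ : Even n₃) :
    IndepCond n₁ n₂ n₃ (n₁ * n₂ * n₃ / 4) ∧
    ∀ M : ℕ, n₁ * n₂ * n₃ / 4 < M → ¬ IndepCond n₁ n₂ n₃ M := by
  classical
  have hcard_univ : (univ : Finset (Fin n₁ × Fin n₂ × Fin n₃)).card = n₁ * n₂ * n₃ := by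
    simp [Fintype.card_prod, mul_assoc]
  constructor
  · -- construction
    set J : Finset (Fin n₁ × Fin n₂ × Fin n₃) :=
      univ.filter (fun x => x.1.val % 2 = x.2.1.val % 2 ∧ x.2.1.val % 2 = x.2.2.val % 2)
      with hJdef
    set K₁ : Finset (Fin n₁ × Fin n₂ × Fin n₃) :=
      univ.filter (fun x => x.1.val % 2 ≠ x.2.1.val % 2 ∧ x.2.1.val % 2 = x.2.2.val % 2)
      with hK₁def
    set K₂ : Finset (Fin n₁ × Fin n₂ × Fin n₃) :=
      univ.filter (fun x => x.2.1.val % 2 ≠ x.1.val % 2 ∧ x.1.val % 2 = x.2.2.val % 2)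
      with hK₂def
    set K₃ : Finset (Fin n₁ × Fin n₂ × Fin n₃) :=
      univ.filter (fun x => x.2.2.val % 2 ≠ x.1.val % 2 ∧ x.1.val % 2 = x.2.1.val % 2)
      with hK₃def
    set s₁ : Fin n₁ × Fin n₂ × Fin n₃ → Fin n₁ × Fin n₂ × Fin n₃ :=
      fun x => (x.1, pflip e₂ x.2.1, pflip e₃ x.2.2) with hs₁def
    set s₂ : Fin n₁ × Fin n₂ × Fin n₃ → Fin n₁ × Fin n₂ × Fin n₃ :=
      fun x => (pflip e₁ x.1, x.2.1, pflip e₃ x.2.2) with hs₂def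
    set s₃ : Fin n₁ × Fin n₂ × Fin n₃ → Fin n₁ × Fin n₂ × Fin n₃ :=
      fun x => (pflip e₁ x.1, pflip e₂ x.2.1, x.2.2) with hs₃def
    have hs₁s₁ : ∀ x, s₁ (s₁ x) = x := by
      intro x
      simp [hs₁def, pflip_pflip]
    have hs₂s₂ : ∀ x, s₂ (s₂ x) = x := by
      intro x
      simp [hs₂def, pflip_pflip]
    have hs₃s₃ : ∀ x, s₃ (s₃ x) = x := by
      intro x
      simp [hs₃def, pflip_pflip]
    -- membership characterizations
    have hmemJ : ∀ x : Fin n₁ × Fin n₂ × Fin n₃,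
        x ∈ J ↔ (x.1.val % 2 = x.2.1.val % 2 ∧ x.2.1.val % 2 = x.2.2.val % 2) := by
      intro x; simp [hJdef]
    have hmemK₁ : ∀ x : Fin n₁ × Fin n₂ × Fin n₃,
        x ∈ K₁ ↔ (x.1.val % 2 ≠ x.2.1.val % 2 ∧ x.2.1.val % 2 = x.2.2.val % 2) := by
      intro x; simp [hK₁def]
    have hmemK₂ : ∀ x : Fin n₁ × Fin n₂ × Fin n₃,
        x ∈ K₂ ↔ (x.2.1.val % 2 ≠ x.1.val % 2 ∧ x.1.val % 2 = x.2.2.val % 2) := by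
      intro x; simp [hK₂def]
    have hmemK₃ : ∀ x : Fin n₁ × Fin n₂ × Fin n₃,
        x ∈ K₃ ↔ (x.2.2.val % 2 ≠ x.1.val % 2 ∧ x.1.val % 2 = x.2.1.val % 2) := by
      intro x; simp [hK₃def]
    have hp1 : ∀ x : Fin n₁, (pflip e₁ x).val % 2 = 1 - x.val % 2 := pflip_val_mod e₁
    have hp2 : ∀ x : Fin n₂, (pflip e₂ x).val % 2 = 1 - x.val % 2 := pflip_val_mod e₂
    have hp3 : ∀ x : Fin n₃, (pflip e₃ x).val % 2 = 1 - x.val % 2 := pflip_val_mod e₃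
    -- maps between the sets
    have hJK₁ : ∀ x ∈ J, s₁ x ∈ K₁ := by
      intro x hx
      rw [hmemJ] at hx
      rw [hmemK₁]
      simp only [hs₁def]
      have := hp2 x.2.1; have := hp3 x.2.2
      have := Nat.mod_lt x.1.val (y := 2) (by norm_num)
      omega
    have hK₁J : ∀ x ∈ K₁, s₁ x ∈ J := by
      intro x hx
      rw [hmemK₁] at hx
      rw [hmemJ]
      simp only [hs₁def]
      have := hp2 x.2.1; have := hp3 x.2.2
      have := Nat.mod_lt x.1.val (y := 2) (by norm_num)
      have := Nat.mod_lt x.2.1.val (y := 2) (by norm_num)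
      omega
    have hJK₂ : ∀ x ∈ J, s₂ x ∈ K₂ := by
      intro x hx
      rw [hmemJ] at hx
      rw [hmemK₂]
      simp only [hs₂def]
      have := hp1 x.1; have := hp3 x.2.2
      have := Nat.mod_lt x.2.1.val (y := 2) (by norm_num)
      omega
    have hK₂J : ∀ x ∈ K₂, s₂ x ∈ J := by
      intro x hx
      rw [hmemK₂] at hx
      rw [hmemJ]
      simp only [hs₂def]
      have := hp1 x.1; have := hp3 x.2.2
      have := Nat.mod_lt x.2.1.val (y := 2) (by norm_num)
      have := Nat.mod_lt x.1.val (y := 2) (by norm_num)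
      omega
    have hJK₃ : ∀ x ∈ J, s₃ x ∈ K₃ := by
      intro x hx
      rw [hmemJ] at hx
      rw [hmemK₃]
      simp only [hs₃def]
      have := hp1 x.1; have := hp2 x.2.1
      have := Nat.mod_lt x.2.2.val (y := 2) (by norm_num)
      omega
    have hK₃J : ∀ x ∈ K₃, s₃ x ∈ J := by
      intro x hx
      rw [hmemK₃] at hx
      rw [hmemJ]
      simp only [hs₃def]
      have := hp1 x.1; have := hp2 x.2.1
      have := Nat.mod_lt x.2.2.val (y := 2) (by norm_num)
      have := Nat.mod_lt x.1.val (y := 2) (by norm_num)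
      omega
    -- cardinalities
    have hcK₁ : K₁.card = J.card :=
      (Finset.card_bij' (fun x _ => s₁ x) (fun x _ => s₁ x)
        (fun x hx => hK₁J x hx) (fun x hx => hJK₁ x hx)
        (fun x _ => hs₁s₁ x) (fun x _ => hs₁s₁ x))
    have hcK₂ : K₂.card = J.card :=
      (Finset.card_bij' (fun x _ => s₂ x) (fun x _ => s₂ x)
        (fun x hx => hK₂J x hx) (fun x hx => hJK₂ x hx)
        (fun x _ => hs₂s₂ x) (fun x _ => hs₂s₂ x))
    have hcK₃ : K₃.card = J.card :=
      (Finset.card_bij' (fun x _ => s₃ x) (fun x _ => s₃ x)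
        (fun x hx => hK₃J x hx) (fun x hx => hJK₃ x hx)
        (fun x _ => hs₃s₃ x) (fun x _ => hs₃s₃ x))
    -- disjointness
    have d1 : Disjoint J K₁ := by
      rw [Finset.disjoint_left]
      intro x hx hx'
      rw [hmemJ] at hx; rw [hmemK₁] at hx'
      omega
    have d2 : Disjoint J K₂ := by
      rw [Finset.disjoint_left]
      intro x hx hx'
      rw [hmemJ] at hx; rw [hmemK₂] at hx'
      omega
    have d3 : Disjoint J K₃ := by
      rw [Finset.disjoint_left]
      intro x hx hx'
      rw [hmemJ] at hx; rw [hmemK₃] at hx'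
      omega
    have d4 : Disjoint K₁ K₂ := by
      rw [Finset.disjoint_left]
      intro x hx hx'
      rw [hmemK₁] at hx; rw [hmemK₂] at hx'
      omega
    have d5 : Disjoint K₁ K₃ := by
      rw [Finset.disjoint_left]
      intro x hx hx'
      rw [hmemK₁] at hx; rw [hmemK₃] at hx'
      omega
    have d6 : Disjoint K₂ K₃ := by
      rw [Finset.disjoint_left]
      intro x hx hx'
      rw [hmemK₂] at hx; rw [hmemK₃] at hx'
      omega
    -- the four sets partition the cube
    have hunion : J ∪ K₁ ∪ K₂ ∪ K₃ = univ := by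
      ext x
      simp only [Finset.mem_union, Finset.mem_univ, iff_true, hmemJ, hmemK₁, hmemK₂, hmemK₃]
      have := Nat.mod_lt x.1.val (y := 2) (by norm_num)
      have := Nat.mod_lt x.2.1.val (y := 2) (by norm_num)
      have := Nat.mod_lt x.2.2.val (y := 2) (by norm_num)
      omega
    have hsum : J.card + K₁.card + K₂.card + K₃.card = n₁ * n₂ * n₃ := by
      have e12 : (J ∪ K₁).card = J.card + K₁.card := Finset.card_union_of_disjoint d1
      have d12 : Disjoint (J ∪ K₁) K₂ := Finset.disjoint_union_left.mpr ⟨d2, d4⟩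
      have e123 : (J ∪ K₁ ∪ K₂).card = J.card + K₁.card + K₂.card := by
        rw [Finset.card_union_of_disjoint d12, e12]
      have d123 : Disjoint (J ∪ K₁ ∪ K₂) K₃ :=
        Finset.disjoint_union_left.mpr ⟨Finset.disjoint_union_left.mpr ⟨d3, d5⟩, d6⟩
      have e1234 : (J ∪ K₁ ∪ K₂ ∪ K₃).card = J.card + K₁.card + K₂.card + K₃.card := by
        rw [Finset.card_union_of_disjoint d123, e123]
      rw [hunion, hcard_univ] at e1234
      omega
    have hJcard : J.card = n₁ * n₂ * n₃ / 4 := by omega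
    refine ⟨J, K₁, K₂, K₃, s₁, s₂, s₃, hJcard, by omega, by omega, by omega,
      d1, d2, d3, d4, d5, d6, ?_, ?_, ?_, ?_, ?_, ?_⟩
    · refine ⟨fun x hx => hJK₁ x hx, fun x _ y _ hxy => ?_, fun y hy => ?_⟩
      · have := congrArg s₁ hxy
        rwa [hs₁s₁, hs₁s₁] at this
      · exact ⟨s₁ y, hK₁J y hy, hs₁s₁ y⟩
    · refine ⟨fun x hx => hJK₂ x hx, fun x _ y _ hxy => ?_, fun y hy => ?_⟩
      · have := congrArg s₂ hxy
        rwa [hs₂s₂, hs₂s₂] at this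
      · exact ⟨s₂ y, hK₂J y hy, hs₂s₂ y⟩
    · refine ⟨fun x hx => hJK₃ x hx, fun x _ y _ hxy => ?_, fun y hy => ?_⟩
      · have := congrArg s₃ hxy
        rwa [hs₃s₃, hs₃s₃] at this
      · exact ⟨s₃ y, hK₃J y hy, hs₃s₃ y⟩
    · intro x _; rfl
    · intro x _; rfl
    · intro x _; rfl
  · -- upper bound
    rintro M hM ⟨J, K₁, K₂, K₃, s₁, s₂, s₃, hJ, h1, h2, h3,
      d1, d2, d3, d4, d5, d6, -, -, -, -, -, -⟩
    have hdvd : 4 ∣ n₁ * n₂ * n₃ := by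
      obtain ⟨a, rfl⟩ := e₁
      obtain ⟨b, rfl⟩ := e₂
      exact ⟨a * b * n₃, by ring⟩
    have d12 : Disjoint (J ∪ K₁) K₂ := Finset.disjoint_union_left.mpr ⟨d2, d4⟩
    have d123 : Disjoint (J ∪ K₁ ∪ K₂) K₃ :=
      Finset.disjoint_union_left.mpr ⟨Finset.disjoint_union_left.mpr ⟨d3, d5⟩, d6⟩
    have hle : (J ∪ K₁ ∪ K₂ ∪ K₃).card ≤ n₁ * n₂ * n₃ := by
      rw [← hcard_univ]
      exact Finset.card_le_univ _
    rw [Finset.card_union_of_disjoint d123, Finset.card_union_of_disjoint d12,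
      Finset.card_union_of_disjoint d1, hJ, h1, h2, h3] at hle
    obtain ⟨q, hq⟩ := hdvd
    omega

end
end Subadditivity
end
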